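/- arXiv:1803.02424 — 4 statements merged into one kernel-verified Lean document; each statement's English description precedes it below -/
import Mathlib

section
/- If φ : ℝ³ → ℝ is harmonic on an open set, then the vector field u(x) = x₃ ∇φ(x) − φ(x) ê₃ satisfies the Stokes equations with pressure p(x) = 2 ∂φ/∂x₃ on that set: Δu = ∇p and ∇·u = 0. -/
noncomputable section
open scoped Real

/-- Points in ℝ³ with the Euclidean norm. -/
abbrev E3 := EuclideanSpace ℝ (Fin 3)

/-- Build a point of ℝ³ from three coordinates. -/
def mk3 (a b c : ℝ) : E3 := (WithLp.equiv 2 (Fin 3 → ℝ)).symm ![a, b, c]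

/-- Partial derivative in the i-th coordinate direction. -/
def pd (i : Fin 3) (f : E3 → ℝ) (x : E3) : ℝ :=
  fderiv ℝ f x (EuclideanSpace.single i 1)

/-- Laplacian. -/
def lap (f : E3 → ℝ) (x : E3) : ℝ := ∑ i : Fin 3, pd i (pd i f) x

/-- Laplace monopole kernel G^S(x,y) = 1/(4π‖x−y‖). -/
def GS (x y : E3) : ℝ := 1 / (4 * Real.pi * ‖x - y‖)

/-- Laplace dipole kernel G^D(x,y) = (x−y)/(4π‖x−y‖³), j-th component. -/
def GD (x y : E3) (j : Fin 3) : ℝ := (x j - y j) / (4 * Real.pi * ‖x - y‖ ^ 3)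

/-- Stokeslet (unit viscosity), (i,j) entry. -/
def J (x y : E3) (i j : Fin 3) : ℝ :=
  (1 / (8 * Real.pi)) *
    ((if i = j then (1 : ℝ) else 0) / ‖x - y‖ +
      (x i - y i) * (x j - y j) / ‖x - y‖ ^ 3)

/-- Q(x,y) = ∇ₓ G^D(x,y), entries Q_{ij} = ∂_{x_i} G^D_j. -/
def Q (x y : E3) (i j : Fin 3) : ℝ := pd i (fun x => GD x y j) x

/-- Image point below the wall x₃ = 0. -/
def yI (y : E3) : E3 := mk3 (y 0) (y 1) (-(y 2))

/-- Image force. -/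
def fI (f : Fin 3 → ℝ) : Fin 3 → ℝ := ![f 0, f 1, -(f 2)]

lemma hasFDerivAt_coord (y : E3) :
    HasFDerivAt (fun z : E3 => z 2) (EuclideanSpace.proj (2:Fin 3) : E3 →L[ℝ] ℝ) y := by
  exact (EuclideanSpace.proj (2:Fin 3) : E3 →L[ℝ] ℝ).hasFDerivAt

lemma proj_single (i : Fin 3) :
    (EuclideanSpace.proj (2:Fin 3) : E3 →L[ℝ] ℝ) (EuclideanSpace.single i 1)
      = (if i = 2 then (1:ℝ) else 0) := by
  simp [EuclideanSpace.single_apply, eq_comm]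

lemma contDiffAt_pd {f : E3 → ℝ} {x : E3} (hf : ContDiffAt ℝ (⊤ : ℕ∞) f x) (i : Fin 3) :
    ContDiffAt ℝ (⊤ : ℕ∞) (pd i f) x := by
  have h1 : ContDiffAt ℝ (⊤ : ℕ∞) (fderiv ℝ f) x := hf.fderiv_right (by simp)
  exact (ContinuousLinearMap.apply ℝ ℝ (EuclideanSpace.single i 1)).contDiff.comp_contDiffAt x h1

lemma pd_congr {f g : E3 → ℝ} {x : E3} (h : f =ᶠ[nhds x] g) (i : Fin 3) :
    pd i f x = pd i g x := by
  unfold pd; rw [h.fderiv_eq]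

lemma pd_add {f g : E3 → ℝ} {x : E3} (hf : DifferentiableAt ℝ f x)
    (hg : DifferentiableAt ℝ g x) (i : Fin 3) :
    pd i (fun y => f y + g y) x = pd i f x + pd i g x := by
  unfold pd; rw [fderiv_fun_add hf hg]; rfl

lemma pd_sub {f g : E3 → ℝ} {x : E3} (hf : DifferentiableAt ℝ f x)
    (hg : DifferentiableAt ℝ g x) (i : Fin 3) :
    pd i (fun y => f y - g y) x = pd i f x - pd i g x := by
  unfold pd; rw [fderiv_fun_sub hf hg]; rfl

lemma pd_const_mul {g : E3 → ℝ} {x : E3} (hg : DifferentiableAt ℝ g x) (a : ℝ) (i : Fin 3) :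
    pd i (fun y => a * g y) x = a * pd i g x := by
  unfold pd; rw [fderiv_const_mul hg a]; rfl

lemma pd_mul_const {g : E3 → ℝ} {x : E3} (hg : DifferentiableAt ℝ g x) (a : ℝ) (i : Fin 3) :
    pd i (fun y => g y * a) x = pd i g x * a := by
  unfold pd; rw [fderiv_mul_const hg a]
  simp [smul_eq_mul, mul_comm]

lemma pd_coord_mul {g : E3 → ℝ} {x : E3} (hg : DifferentiableAt ℝ g x) (i : Fin 3) :
    pd i (fun y => y 2 * g y) x
      = (if i = 2 then (1:ℝ) else 0) * g x + x 2 * pd i g x := by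
  have H := ((hasFDerivAt_coord x).fun_mul hg.hasFDerivAt).fderiv
  unfold pd
  rw [H]
  simp only [ContinuousLinearMap.add_apply, ContinuousLinearMap.coe_smul',
    Pi.smul_apply, smul_eq_mul, proj_single]
  ring

lemma diff_coord_mul {g : E3 → ℝ} {x : E3} (hg : DifferentiableAt ℝ g x) :
    DifferentiableAt ℝ (fun y : E3 => y 2 * g y) x :=
  (hasFDerivAt_coord x).differentiableAt.mul hg

lemma pd_comm {f : E3 → ℝ} {x : E3} (hf : ContDiffAt ℝ (⊤ : ℕ∞) f x) (i j : Fin 3) :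
    pd i (pd j f) x = pd j (pd i f) x := by
  have hd : DifferentiableAt ℝ (fderiv ℝ f) x :=
    (hf.fderiv_right (m := 1) (WithTop.coe_le_coe.mpr le_top)).differentiableAt one_ne_zero
  have e1 : ∀ v w : E3, fderiv ℝ (fun y => fderiv ℝ f y v) x w
      = fderiv ℝ (fderiv ℝ f) x w v := by
    intro v w
    have h : fderiv ℝ (fun y => fderiv ℝ f y v) x
        = (ContinuousLinearMap.apply ℝ ℝ v).comp (fderiv ℝ (fderiv ℝ f) x) :=
      ((ContinuousLinearMap.apply ℝ ℝ v).hasFDerivAt.comp x hd.hasFDerivAt).fderiv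
    rw [h]; rfl
  have hsym := hf.isSymmSndFDerivAt (by rw [minSmoothness_of_isRCLikeNormedField]; exact WithTop.coe_le_coe.mpr le_top)
  have hpd : ∀ k, pd k f = fun y => fderiv ℝ f y (EuclideanSpace.single k 1) := fun _ => rfl
  simp only [pd, hpd]
  rw [e1, e1, hsym.eq]


/-- The Papkovich–Neuber field u = x₃∇φ − φê₃ of a harmonic φ solves the Stokes
equations with pressure p = 2∂φ/∂x₃. -/
theorem stmt8 (U : Set E3) (hU : IsOpen U) (φ : E3 → ℝ)
    (hφ : ContDiffOn ℝ (⊤ : ℕ∞) φ U) (hharm : ∀ x ∈ U, lap φ x = 0) :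
    ∀ x ∈ U,
      (∀ j : Fin 3,
        lap (fun x => x 2 * pd j φ x - φ x * (if j = 2 then (1 : ℝ) else 0)) x
          = pd j (fun x => 2 * pd 2 φ x) x) ∧
      (∑ j : Fin 3,
        pd j (fun x => x 2 * pd j φ x - φ x * (if j = 2 then (1 : ℝ) else 0)) x = 0) := by
  intro x hx
  have hC : ∀ y ∈ U, ContDiffAt ℝ (⊤ : ℕ∞) φ y := fun y hy => hφ.contDiffAt (hU.mem_nhds hy)
  have hCx := hC x hx
  have hUx : U ∈ nhds x := hU.mem_nhds hx
  -- basic differentiability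
  have hDf : ∀ y ∈ U, ∀ (g : E3 → ℝ), ContDiffAt ℝ (⊤ : ℕ∞) g y → DifferentiableAt ℝ g y :=
    fun y _ g hg => hg.differentiableAt (by simp)
  -- step 1: first derivative formula, valid on U
  have step1 : ∀ (j i : Fin 3), ∀ y ∈ U,
      pd i (fun z => z 2 * pd j φ z - φ z * (if j = 2 then (1:ℝ) else 0)) y
        = (if i = 2 then (1:ℝ) else 0) * pd j φ y + y 2 * pd i (pd j φ) y
            - pd i φ y * (if j = 2 then (1:ℝ) else 0) := by
    intro j i y hy
    have hCy := hC y hy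
    have d1 : DifferentiableAt ℝ (pd j φ) y := hDf y hy _ (contDiffAt_pd hCy j)
    have d2 : DifferentiableAt ℝ φ y := hDf y hy _ hCy
    rw [pd_sub (diff_coord_mul d1) (d2.mul_const _), pd_coord_mul d1, pd_mul_const d2]
  -- second derivative formula at x
  have step2 : ∀ (j i : Fin 3),
      pd i (pd i (fun z => z 2 * pd j φ z - φ z * (if j = 2 then (1:ℝ) else 0))) x
        = 2 * (if i = 2 then (1:ℝ) else 0) * pd i (pd j φ) x
            + x 2 * pd i (pd i (pd j φ)) x
            - pd i (pd i φ) x * (if j = 2 then (1:ℝ) else 0) := by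
    intro j i
    have hev : (pd i (fun z => z 2 * pd j φ z - φ z * (if j = 2 then (1:ℝ) else 0)))
        =ᶠ[nhds x] (fun y => (if i = 2 then (1:ℝ) else 0) * pd j φ y
            + y 2 * pd i (pd j φ) y - pd i φ y * (if j = 2 then (1:ℝ) else 0)) :=
      Filter.eventually_of_mem hUx (fun y hy => step1 j i y hy)
    rw [pd_congr hev]
    have c1 : ContDiffAt ℝ (⊤ : ℕ∞) (pd j φ) x := contDiffAt_pd hCx j
    have c2 : ContDiffAt ℝ (⊤ : ℕ∞) (pd i (pd j φ)) x := contDiffAt_pd c1 i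
    have c3 : ContDiffAt ℝ (⊤ : ℕ∞) (pd i φ) x := contDiffAt_pd hCx i
    have d1 := hDf x hx _ c1
    have d2 := hDf x hx _ c2
    have d3 := hDf x hx _ c3
    rw [pd_sub ((d1.const_mul _).fun_add (diff_coord_mul d2)) (d3.mul_const _),
      pd_add (d1.const_mul _) (diff_coord_mul d2), pd_const_mul d1,
      pd_coord_mul d2, pd_mul_const d3]
    ring
  -- third derivative swap
  have swap3 : ∀ (j i : Fin 3), pd i (pd i (pd j φ)) x = pd j (pd i (pd i φ)) x := by
    intro j i
    have hev : (pd i (pd j φ)) =ᶠ[nhds x] (pd j (pd i φ)) :=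
      Filter.eventually_of_mem hUx (fun y hy => pd_comm (hC y hy) i j)
    rw [pd_congr hev, pd_comm (contDiffAt_pd hCx i) i j]
  -- lap φ vanishes near x, so its derivatives vanish
  have hlap0 : ∀ j : Fin 3, ∑ i : Fin 3, pd j (pd i (pd i φ)) x = 0 := by
    intro j
    have hs : ∀ y, lap φ y = pd 0 (pd 0 φ) y + pd 1 (pd 1 φ) y + pd 2 (pd 2 φ) y := by
      intro y; simp [lap, Fin.sum_univ_three]
    have d : ∀ i : Fin 3, DifferentiableAt ℝ (pd i (pd i φ)) x :=
      fun i => hDf x hx _ (contDiffAt_pd (contDiffAt_pd hCx i) i)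
    have h1 : pd j (fun y => pd 0 (pd 0 φ) y + pd 1 (pd 1 φ) y + pd 2 (pd 2 φ) y) x
        = ∑ i : Fin 3, pd j (pd i (pd i φ)) x := by
      rw [Fin.sum_univ_three, pd_add ((d 0).fun_add (d 1)) (d 2), pd_add (d 0) (d 1)]
    have h0 : pd j (fun y => pd 0 (pd 0 φ) y + pd 1 (pd 1 φ) y + pd 2 (pd 2 φ) y) x = 0 := by
      have hev : (fun y => pd 0 (pd 0 φ) y + pd 1 (pd 1 φ) y + pd 2 (pd 2 φ) y)
          =ᶠ[nhds x] (fun _ => (0:ℝ)) :=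
        Filter.eventually_of_mem hUx (fun y hy =>
          show pd 0 (pd 0 φ) y + pd 1 (pd 1 φ) y + pd 2 (pd 2 φ) y = 0 by
            rw [← hs y]; exact hharm y hy)
      rw [pd_congr hev]
      unfold pd; simp
    rw [← h1, h0]
  have hlapx : ∑ i : Fin 3, pd i (pd i φ) x = 0 := by
    have := hharm x hx; simpa [lap] using this
  constructor
  · intro j
    have hrhs : pd j (fun y => 2 * pd 2 φ y) x = 2 * pd 2 (pd j φ) x := by
      rw [pd_const_mul (hDf x hx _ (contDiffAt_pd hCx 2)) 2 j, pd_comm hCx j 2]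
    rw [hrhs]
    have hsum0 : ∑ i : Fin 3, pd i (pd i (pd j φ)) x = 0 := by
      calc ∑ i : Fin 3, pd i (pd i (pd j φ)) x
          = ∑ i : Fin 3, pd j (pd i (pd i φ)) x := Finset.sum_congr rfl (fun i _ => swap3 j i)
        _ = 0 := hlap0 j
    simp only [lap]
    rw [Fin.sum_univ_three] at hsum0 hlapx ⊢
    rw [step2 j 0, step2 j 1, step2 j 2]
    have h0 : (if (0:Fin 3) = 2 then (1:ℝ) else 0) = 0 := by simp [Fin.ext_iff]
    have h1 : (if (1:Fin 3) = 2 then (1:ℝ) else 0) = 0 := by simp [Fin.ext_iff]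
    have h2 : (if (2:Fin 3) = 2 then (1:ℝ) else 0) = 1 := by simp
    rw [h0, h1, h2]
    linear_combination x 2 * hsum0 - (if j = 2 then (1:ℝ) else 0) * hlapx
  · have hdiv : ∀ j : Fin 3,
        pd j (fun z => z 2 * pd j φ z - φ z * (if j = 2 then (1:ℝ) else 0)) x
          = x 2 * pd j (pd j φ) x + ((if j = 2 then (1:ℝ) else 0) * pd j φ x
              - pd j φ x * (if j = 2 then (1:ℝ) else 0)) := by
      intro j; rw [step1 j j x hx]; ring
    simp only [hdiv]
    have : ∀ j : Fin 3, (if j = 2 then (1:ℝ) else 0) * pd j φ x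
        - pd j φ x * (if j = 2 then (1:ℝ) else 0) = 0 := fun j => by ring
    simp only [this, add_zero, ← Finset.mul_sum, hlapx, mul_zero]
end
end

section
/- Let y ∈ ℝ³ with y₃ > 0, y^I = (y₁,y₂,−y₃), f ∈ ℝ³, f^I = (f₁,f₂,−f₃). Then the image-system velocity u(x) = J(x,y)f − J(x,y^I)f^I − (x₃∇_xφ(x) − φ(x)ê₃), with φ(x) = G^S(x,y^I)f^I₃ + G^D(x,y^I)·(y₃f^I), satisfies u(x) = 0 for all x with x₃ = 0 and x ≠ y^I, x ≠ y. -/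
noncomputable section
open scoped Real

set_option maxHeartbeats 1000000 in
/-- The Gimbutas–Greengard–Veerapaneni image system vanishes on the wall x₃ = 0. -/
theorem stmt10 (y : E3) (hy : y 2 > 0) (f : Fin 3 → ℝ) :
    ∀ x : E3, x 2 = 0 → x ≠ y → x ≠ yI y →
      ∀ i : Fin 3,
        (∑ j : Fin 3, J x y i j * f j) - (∑ j : Fin 3, J x (yI y) i j * fI f j)
          - (x 2 * pd i (fun x =>
                GS x (yI y) * fI f 2 + ∑ j : Fin 3, GD x (yI y) j * (y 2 * fI f j)) x
             - (GS x (yI y) * fI f 2 + ∑ j : Fin 3, GD x (yI y) j * (y 2 * fI f j))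
               * (if i = 2 then (1 : ℝ) else 0)) = 0 := by
  intro x hx hxy hxyI i
  have h0 : yI y 0 = y 0 := by simp [yI, mk3]
  have h1 : yI y 1 = y 1 := by simp [yI, mk3]
  have h2 : yI y 2 = -(y 2) := by simp [yI, mk3]
  have hr : ‖x - yI y‖ = ‖x - y‖ := by
    rw [EuclideanSpace.norm_eq, EuclideanSpace.norm_eq]
    congr 1
    simp only [Fin.sum_univ_three, PiLp.sub_apply, h0, h1, h2, hx, Real.norm_eq_abs, sq_abs]
    try ring
  have hr0 : ‖x - y‖ ≠ 0 := by
    simpa [sub_eq_zero] using hxy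
  have hpi : Real.pi ≠ 0 := Real.pi_ne_zero
  rw [hx, zero_mul, zero_sub, sub_neg_eq_add]
  fin_cases i <;>
  · simp only [J, GS, GD, fI, Fin.sum_univ_three, h0, h1, h2, hr, hx, Fin.isValue,
      Matrix.cons_val_zero, Matrix.cons_val_one, Matrix.head_cons, Matrix.cons_val_two,
      Matrix.tail_cons, Fin.mk_one, Fin.mk_zero, Fin.reduceEq, if_false, if_true,
      Fin.zero_eta, reduceIte, Fin.reduceFinMk]
    field_simp
    try ring
end
end

section
/- Let y₃ > 0 and f ∈ ℝ³, with y^I and f^I the images. Define φ^{GD}(x) = ê₃·(Q(x,y^I)f^I) where Q(x,y) = ∇_x G^D(x,y), and u^{GD}(x) = x₃∇_xφ^{GD}(x) − φ^{GD}(x)ê₃. Then the field u(x) = Q(x,y)f − Q(x,y^I)f^I − 2u^{GD}(x) vanishes for all x with x₃ = 0, x ∉ {y, y^I}. -/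
/-!
On the wall the reflection `R = diag(1, 1, -1)` maps `x - y` to `x - yᴵ`, so the explicit kernel
`Q_{ij}(x,y) = (δ_{ij} ‖x-y‖² - 3 (x-y)_i (x-y)_j) / (4π‖x-y‖⁵)` satisfies `Q(x,yᴵ) = R Q(x,y) R`;
as `fᴵ = R f`, this gives `Q(x,yᴵ) fᴵ = R Q(x,y) f`. The term `x₃ ∇φ^{GD}` drops out, and
`φ^{GD} = -(Q(x,y) f)₃`, so the tangential components cancel directly and the normal component
`2 (Q(x,y) f)₃` is cancelled by `-2 u^{GD}₃ = 2 φ^{GD}`.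
-/

noncomputable section
open scoped Real

/-- The potential φ^{GD} = ê₃·(Q(x,yᴵ)fᴵ) for the image of the Stokeslet Laplacian. -/
def phiGD (y : E3) (f : Fin 3 → ℝ) (x : E3) : ℝ :=
  ∑ j : Fin 3, Q x (yI y) 2 j * fI f j

lemma sq_rpow_neg_natCast_div_two {r : ℝ} (hr : 0 ≤ r) (n : ℕ) :
    (r ^ 2) ^ (-(n : ℝ) / 2) = (r ^ n)⁻¹ := by
  rw [← Real.rpow_natCast r 2, ← Real.rpow_mul hr, ← Real.rpow_natCast r n, ← Real.rpow_neg hr]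
  congr 1
  push_cast
  ring

lemma GD_eq_rpow (x y : E3) (j : Fin 3) :
    GD x y j = (4 * π)⁻¹ * ((x j - y j) * (‖x - y‖ ^ 2) ^ (-(3 : ℝ) / 2)) := by
  have h := sq_rpow_neg_natCast_div_two (norm_nonneg (x - y)) 3
  push_cast at h
  rw [GD, h, div_eq_mul_inv, mul_inv, mul_inv]
  ring

lemma Q_eq (y : E3) {x : E3} (hxy : x ≠ y) (i j : Fin 3) :
    Q x y i j = (if i = j then (1 : ℝ) else 0) / (4 * π * ‖x - y‖ ^ 3)
      - 3 * (x i - y i) * (x j - y j) / (4 * π * ‖x - y‖ ^ 5) := by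
  have hr : 0 < ‖x - y‖ := norm_sub_pos_iff.mpr hxy
  have hnormSq : HasFDerivAt (fun x' : E3 => ‖x' - y‖ ^ 2)
      (2 • (innerSL ℝ (x - y)).comp (ContinuousLinearMap.id ℝ E3)) x :=
    ((hasFDerivAt_id x).sub_const y).norm_sq
  have hcoord : HasFDerivAt (fun x' : E3 => x' j - y j) (EuclideanSpace.proj j : E3 →L[ℝ] ℝ) x :=
    (EuclideanSpace.proj j : E3 →L[ℝ] ℝ).hasFDerivAt.sub_const (y j)
  have hGD : HasFDerivAt
      (fun x' : E3 => (4 * π)⁻¹ * ((x' j - y j) * (‖x' - y‖ ^ 2) ^ (-(3 : ℝ) / 2))) _ x :=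
    (hcoord.mul (hnormSq.rpow_const (Or.inl (by positivity)))).const_mul (4 * π)⁻¹
  have hproj : (EuclideanSpace.proj j : E3 →L[ℝ] ℝ) (EuclideanSpace.single i 1)
      = if i = j then (1 : ℝ) else 0 := by
    simp [eq_comm]
  have hinner : innerSL ℝ (x - y) (EuclideanSpace.single i 1) = x i - y i := by
    simp [EuclideanSpace.inner_single_right]
  have hpow3 := sq_rpow_neg_natCast_div_two hr.le 3
  have hpow5 := sq_rpow_neg_natCast_div_two hr.le 5
  rw [show -((5 : ℕ) : ℝ) / 2 = -(3 : ℝ) / 2 - 1 by norm_num] at hpow5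
  push_cast at hpow3
  rw [Q, pd, funext (GD_eq_rpow · y j), hGD.fderiv]
  simp only [FunLike.coe_smul, FunLike.coe_add, Pi.smul_apply, Pi.add_apply,
    ContinuousLinearMap.comp_apply, ContinuousLinearMap.id_apply, smul_eq_mul,
    hproj, hinner, hpow3, hpow5]
  field_simp
  split_ifs <;> ring

/-- The sign of the reflection `diag(1, 1, -1)` in the wall `x₃ = 0`, on the `k`-th axis. -/
def wallSign (k : Fin 3) : ℝ := if k = 2 then -1 else 1

lemma wallSign_sq (k : Fin 3) : wallSign k ^ 2 = 1 := by
  unfold wallSign; split_ifs <;> norm_num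

lemma fI_apply (f : Fin 3 → ℝ) (k : Fin 3) : fI f k = wallSign k * f k := by
  fin_cases k <;> simp [fI, wallSign]

lemma sub_yI_apply_of_wall (y : E3) {x : E3} (hx : x 2 = 0) (k : Fin 3) :
    x k - yI y k = wallSign k * (x k - y k) := by
  fin_cases k <;> simp [yI, mk3, wallSign, hx]

lemma norm_sub_yI_of_wall (y : E3) {x : E3} (hx : x 2 = 0) : ‖x - yI y‖ = ‖x - y‖ := by
  simp only [EuclideanSpace.norm_eq, PiLp.sub_apply, sub_yI_apply_of_wall y hx, Real.norm_eq_abs,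
    mul_pow, sq_abs, wallSign_sq, one_mul]

lemma Q_yI_of_wall (y : E3) {x : E3} (hx : x 2 = 0) (hxy : x ≠ y) (hxyI : x ≠ yI y)
    (i j : Fin 3) : Q x (yI y) i j = wallSign i * wallSign j * Q x y i j := by
  rw [Q_eq _ hxyI, Q_eq _ hxy, norm_sub_yI_of_wall y hx, sub_yI_apply_of_wall y hx,
    sub_yI_apply_of_wall y hx]
  have hsign := wallSign_sq i
  split_ifs with hij
  · subst hij
    linear_combination (-1 / (4 * π * ‖x - y‖ ^ 3)) * hsign
  · ring

lemma sum_Q_yI_fI_of_wall (y : E3) {x : E3} (hx : x 2 = 0) (hxy : x ≠ y) (hxyI : x ≠ yI y)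
    (f : Fin 3 → ℝ) (i : Fin 3) :
    ∑ j, Q x (yI y) i j * fI f j = wallSign i * ∑ j, Q x y i j * f j := by
  rw [Finset.mul_sum]
  refine Finset.sum_congr rfl fun j _ => ?_
  rw [Q_yI_of_wall y hx hxy hxyI, fI_apply]
  linear_combination wallSign i * Q x y i j * f j * wallSign_sq j

theorem stmt13_general (y : E3) (f : Fin 3 → ℝ) :
    ∀ x : E3, x 2 = 0 → x ≠ y → x ≠ yI y →
      ∀ i : Fin 3,
        (∑ j : Fin 3, Q x y i j * f j) - (∑ j : Fin 3, Q x (yI y) i j * fI f j)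
          - 2 * (x 2 * pd i (phiGD y f) x
              - phiGD y f x * (if i = 2 then (1 : ℝ) else 0)) = 0 := by
  intro x hx hxy hxyI i
  have hphi : phiGD y f x = -∑ j, Q x y 2 j * f j := by
    rw [phiGD, sum_Q_yI_fI_of_wall y hx hxy hxyI, wallSign, if_pos rfl, neg_one_mul]
  rw [hphi, hx, sum_Q_yI_fI_of_wall y hx hxy hxyI, wallSign]
  fin_cases i <;> simp [two_mul]

/-- The image system for the Laplacian of the Stokeslet vanishes on the wall x₃ = 0. -/
theorem stmt13 (y : E3) (hy : y 2 > 0) (f : Fin 3 → ℝ) :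
    ∀ x : E3, x 2 = 0 → x ≠ y → x ≠ yI y →
      ∀ i : Fin 3,
        (∑ j : Fin 3, Q x y i j * f j) - (∑ j : Fin 3, Q x (yI y) i j * fI f j)
          - 2 * (x 2 * pd i (phiGD y f) x
              - phiGD y f x * (if i = 2 then (1 : ℝ) else 0)) = 0 :=
  stmt13_general y f
end
end

section
/- The free-space Rotne–Prager–Yamakawa bi-Laplacian term vanishes: for x ≠ y, Δ_x Δ_y [J(x,y)f] = 0 for any constant f ∈ ℝ³, so the RPY velocity (1 + (a²/6)Δ_x)(1 + (b²/6)Δ_y)J(x,y)f equals J(x,y)f + ((a²+b²)/6)Δ_x J(x,y)f. -/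
noncomputable section
open scoped Real

/-! Writing `v = x - y`, the row `∑ⱼ J x y i j * f j` is `(8π)⁻¹ Q(v) ‖v‖⁻³` for the quadratic
form `Q(v) = fᵢ ‖v‖² + vᵢ ⟪f, v⟫`. In ℝ³ the product rule, `Δ‖v‖ᵖ = p (p + 1) ‖v‖ᵖ⁻²` and Euler's
identity `v ⬝ ∇Q = 2 Q` give `Δ(Q ‖v‖ᵖ) = ΔQ ‖v‖ᵖ + p (p + 5) Q ‖v‖ᵖ⁻²`, so the Laplacian maps the
family `(α ‖v‖² + β vᵢ ⟪f, v⟫) ‖v‖ᵖ` into itself with `p ↦ p - 2`. One Laplacian of the row gives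
`(8π)⁻¹ (2 fᵢ ‖v‖² - 6 vᵢ ⟪f, v⟫) ‖v‖⁻⁵`, and a second one gives `0`. As `J` depends only on `x - y`,
`Δ_y` and `Δ_x` act on it in the same way. -/

open scoped RealInnerProductSpace Topology

namespace Stokeslet

variable {u w : E3 → ℝ} {v : E3}

lemma pd_eq_of_hasFDerivAt {L : E3 →L[ℝ] ℝ} (h : HasFDerivAt u L v) (i : Fin 3) :
    pd i u v = L (EuclideanSpace.single i 1) := by
  rw [pd, h.fderiv]

lemma pd_clm (L : E3 →L[ℝ] ℝ) (i : Fin 3) (x : E3) : pd i L x = L (EuclideanSpace.single i 1) :=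
  pd_eq_of_hasFDerivAt L.hasFDerivAt i

lemma pd_congr (h : u =ᶠ[𝓝 v] w) (i : Fin 3) : pd i u v = pd i w v := by
  rw [pd, pd, h.fderiv_eq]

lemma lap_congr (h : u =ᶠ[𝓝 v] w) : lap u v = lap w v :=
  Finset.sum_congr rfl fun i _ => pd_congr (h.eventually_nhds.mono fun _ hx => pd_congr hx i) i

lemma pd_const_mul (c : ℝ) (i : Fin 3) : pd i (fun x => c * u x) = fun x => c * pd i u x := by
  funext x
  change fderiv ℝ (c • u) x _ = _
  simp [fderiv_const_smul_field, pd]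

lemma lap_const_mul (c : ℝ) : lap (fun x => c * u x) v = c * lap u v := by
  simp only [lap, pd_const_mul, Finset.mul_sum]

lemma pd_add (hu : DifferentiableAt ℝ u v) (hw : DifferentiableAt ℝ w v) (i : Fin 3) :
    pd i (fun x => u x + w x) v = pd i u v + pd i w v := by
  simp [pd, fderiv_fun_add hu hw]

lemma pd_mul (hu : DifferentiableAt ℝ u v) (hw : DifferentiableAt ℝ w v) (i : Fin 3) :
    pd i (fun x => u x * w x) v = pd i u v * w v + u v * pd i w v := by
  simp only [pd, fderiv_fun_mul hu hw, add_apply, smul_apply, smul_eq_mul]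
  ring

lemma pd_comp_sub (g : E3 → ℝ) (y : E3) (i : Fin 3) :
    pd i (fun x => g (x - y)) = fun x => pd i g (x - y) := by
  funext x
  rw [pd, pd, fderiv_comp_sub]

lemma pd_comp_const_sub (g : E3 → ℝ) (x : E3) (i : Fin 3) :
    pd i (fun y => g (x - y)) = fun y => -pd i g (x - y) := by
  funext y
  have h := (ContinuousLinearEquiv.neg ℝ (M := E3)).comp_right_fderiv
    (f := fun z => g (x + z)) (x := y)
  have e : (fun z => g (x + z)) ∘ ContinuousLinearEquiv.neg ℝ = fun y => g (x - y) := by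
    funext z; simp [sub_eq_add_neg]
  rw [e, fderiv_comp_add_left, ContinuousLinearEquiv.neg_apply, ← sub_eq_add_neg] at h
  simp [pd, h]

lemma lap_comp_sub (g : E3 → ℝ) (y x : E3) : lap (fun x => g (x - y)) x = lap g (x - y) := by
  simp only [lap, pd_comp_sub]

lemma lap_comp_const_sub (g : E3 → ℝ) (x y : E3) : lap (fun y => g (x - y)) y = lap g (x - y) := by
  have h (i : Fin 3) : pd i (fun y => -pd i g (x - y)) = fun y => pd i (pd i g) (x - y) := by
    simpa only [neg_one_mul, pd_comp_const_sub, neg_neg] using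
      pd_const_mul (u := fun y => pd i g (x - y)) (-1) i
  simp only [lap, pd_comp_const_sub, h]

lemma differentiableAt_pd (hu : ContDiffAt ℝ 2 u v) (i : Fin 3) :
    DifferentiableAt ℝ (pd i u) v :=
  ((hu.fderiv_right (m := 1) (by norm_num)).differentiableAt (by norm_num)).clm_apply
    (differentiableAt_const _)

lemma eventually_differentiableAt (hu : ContDiffAt ℝ 2 u v) :
    ∀ᶠ x in 𝓝 v, DifferentiableAt ℝ u x :=
  (hu.eventually (by simp)).mono fun _ h => h.differentiableAt (by norm_num)

lemma sum_mul_pd (u : E3 → ℝ) (x v : E3) : ∑ i, v i * pd i u x = fderiv ℝ u x v := by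
  conv_rhs => rw [← (EuclideanSpace.basisFun (Fin 3) ℝ).sum_repr v]
  simp [pd, map_sum]

lemma pd_coord (i k : Fin 3) : pd i (fun x : E3 => x k) v = if i = k then 1 else 0 := by
  rw [pd, (PiLp.hasFDerivAt_apply (𝕜 := ℝ) 2 v k).fderiv]
  simp [eq_comm]

lemma hasFDerivAt_norm_rpow_of_ne_zero {F : Type*} [NormedAddCommGroup F] [InnerProductSpace ℝ F]
    {x : F} (p : ℝ) (hx : x ≠ 0) :
    HasFDerivAt (fun x : F => ‖x‖ ^ p) ((p * ‖x‖ ^ (p - 2)) • innerSL ℝ x) x := by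
  have hr : 0 < ‖x‖ := norm_pos_iff.2 hx
  have h := (hasStrictFDerivAt_norm_sq x).hasFDerivAt.rpow_const (p := p / 2)
    (Or.inl (by positivity))
  convert h using 1
  · funext y
    rw [← Real.rpow_natCast, ← Real.rpow_mul (norm_nonneg y)]
    ring_nf
  · rw [← Real.rpow_natCast, ← Real.rpow_mul hr.le, ← Nat.cast_smul_eq_nsmul ℝ, smul_smul]
    congr 1
    push_cast
    ring_nf

lemma pd_pd_mul (hu : ContDiffAt ℝ 2 u v) (hw : ContDiffAt ℝ 2 w v) (i : Fin 3) :
    pd i (pd i fun x => u x * w x) v =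
      pd i (pd i u) v * w v + 2 * (pd i u v * pd i w v) + u v * pd i (pd i w) v := by
  have h : pd i (fun x => u x * w x) =ᶠ[𝓝 v] fun x => pd i u x * w x + u x * pd i w x :=
    (eventually_differentiableAt hu).and (eventually_differentiableAt hw) |>.mono
      fun _ h => pd_mul h.1 h.2 i
  have hu' := hu.differentiableAt (by norm_num)
  have hw' := hw.differentiableAt (by norm_num)
  rw [pd_congr h, pd_add (u := fun x => pd i u x * w x) (w := fun x => u x * pd i w x)
      ((differentiableAt_pd hu i).mul hw') (hu'.mul (differentiableAt_pd hw i)),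
    pd_mul (differentiableAt_pd hu i) hw', pd_mul hu' (differentiableAt_pd hw i)]
  ring

lemma lap_mul (hu : ContDiffAt ℝ 2 u v) (hw : ContDiffAt ℝ 2 w v) :
    lap (fun x => u x * w x) v =
      lap u v * w v + 2 * ∑ i, pd i u v * pd i w v + u v * lap w v := by
  simp only [lap, pd_pd_mul hu hw, Finset.sum_add_distrib, Finset.sum_mul, Finset.mul_sum]

lemma contDiffAt_norm_rpow (p : ℝ) (hv : v ≠ 0) : ContDiffAt ℝ 2 (fun x : E3 => ‖x‖ ^ p) v :=
  (contDiffAt_norm ℝ hv).rpow_const_of_ne (norm_ne_zero_iff.2 hv)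

lemma pd_norm_rpow (p : ℝ) (hv : v ≠ 0) (i : Fin 3) :
    pd i (fun x : E3 => ‖x‖ ^ p) v = p * ‖v‖ ^ (p - 2) * v i := by
  rw [pd_eq_of_hasFDerivAt (hasFDerivAt_norm_rpow_of_ne_zero p hv)]
  simp [EuclideanSpace.inner_single_right]

lemma lap_norm_rpow (p : ℝ) (hv : v ≠ 0) :
    lap (fun x : E3 => ‖x‖ ^ p) v = p * (p + 1) * ‖v‖ ^ (p - 2) := by
  have hpd (i : Fin 3) : pd i (pd i fun x : E3 => ‖x‖ ^ p) v =
      p * ((p - 2) * ‖v‖ ^ (p - 4) * v i ^ 2 + ‖v‖ ^ (p - 2)) := by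
    have h : pd i (fun x : E3 => ‖x‖ ^ p) =ᶠ[𝓝 v] fun x => p * (‖x‖ ^ (p - 2) * x i) :=
      (eventually_ne_nhds hv |>.mono fun x hx => by rw [pd_norm_rpow p hx]; ring)
    simp only [pd_congr h, pd_const_mul]
    rw [pd_mul ((contDiffAt_norm_rpow _ hv).differentiableAt (by norm_num))
        (PiLp.hasFDerivAt_apply (𝕜 := ℝ) 2 v i).differentiableAt,
      pd_norm_rpow _ hv, pd_coord, if_pos rfl]
    ring_nf
  have hr : 0 < ‖v‖ := norm_pos_iff.2 hv
  have hsq : ∑ i, v i ^ 2 = ‖v‖ ^ 2 := by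
    simp [EuclideanSpace.norm_sq_eq]
  have hpow : ‖v‖ ^ (p - 4) * ‖v‖ ^ 2 = ‖v‖ ^ (p - 2) := by
    rw [← Real.rpow_natCast, ← Real.rpow_add hr]; ring_nf
  simp only [lap, hpd, ← Finset.mul_sum, Finset.sum_add_distrib, hsq, mul_assoc (p - 2), hpow,
    Finset.sum_const, Finset.card_univ, Fintype.card_fin, nsmul_eq_mul]
  ring

lemma lap_mul_norm_rpow (hu : ContDiffAt ℝ 2 u v) (p : ℝ) (hv : v ≠ 0) :
    lap (fun x => u x * ‖x‖ ^ p) v =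
      lap u v * ‖v‖ ^ p + p * ‖v‖ ^ (p - 2) * (2 * fderiv ℝ u v v + (p + 1) * u v) := by
  have hgrad : ∑ i, pd i u v * pd i (fun x : E3 => ‖x‖ ^ p) v =
      p * ‖v‖ ^ (p - 2) * fderiv ℝ u v v := by
    rw [← sum_mul_pd, Finset.mul_sum]
    simp only [pd_norm_rpow p hv]
    exact Finset.sum_congr rfl fun _ _ => by ring
  rw [lap_mul hu (contDiffAt_norm_rpow p hv), lap_norm_rpow p hv, hgrad]
  ring

section QuadForm

def quadForm (a b : E3) (α β : ℝ) (x : E3) : ℝ := α * ‖x‖ ^ 2 + β * (⟪a, x⟫ * ⟪b, x⟫)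

variable (a b : E3) (α β : ℝ)

lemma hasFDerivAt_quadForm (x : E3) :
    HasFDerivAt (quadForm a b α β)
      (α • (2 • innerSL ℝ x) + β • (⟪a, x⟫ • innerSL ℝ b + ⟪b, x⟫ • innerSL ℝ a)) x :=
  ((hasStrictFDerivAt_norm_sq x).hasFDerivAt.const_mul α).add
    (((innerSL ℝ a).hasFDerivAt.mul (innerSL ℝ b).hasFDerivAt).const_mul β)

lemma contDiff_quadForm : ContDiff ℝ 2 (quadForm a b α β) :=
  (contDiff_const.mul (contDiff_norm_sq ℝ)).add
    (contDiff_const.mul ((innerSL ℝ a).contDiff.mul (innerSL ℝ b).contDiff))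

lemma fderiv_quadForm_self (x : E3) : fderiv ℝ (quadForm a b α β) x x = 2 * quadForm a b α β x := by
  rw [(hasFDerivAt_quadForm a b α β x).fderiv]
  simp [quadForm]
  ring

lemma pd_quadForm (i : Fin 3) :
    pd i (quadForm a b α β) =
      ⇑(α • (2 • EuclideanSpace.proj i) + β • (b i • innerSL ℝ a + a i • innerSL ℝ b) :
        E3 →L[ℝ] ℝ) := by
  ext x
  rw [pd_eq_of_hasFDerivAt (hasFDerivAt_quadForm a b α β x)]
  simp [EuclideanSpace.inner_single_right]
  ring

lemma lap_quadForm (x : E3) : lap (quadForm a b α β) x = 6 * α + 2 * β * ⟪a, b⟫ := by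
  simp only [lap, pd_quadForm, pd_clm]
  simp [Fin.sum_univ_three, PiLp.inner_apply]
  ring

lemma lap_quadForm_mul_norm_rpow (p : ℝ) {v : E3} (hv : v ≠ 0) :
    lap (fun x => quadForm a b α β x * ‖x‖ ^ p) v =
      quadForm a b (6 * α + 2 * β * ⟪a, b⟫ + p * (p + 5) * α) (p * (p + 5) * β) v *
        ‖v‖ ^ (p - 2) := by
  have hpow : ‖v‖ ^ p = ‖v‖ ^ 2 * ‖v‖ ^ (p - 2) := by
    rw [← Real.rpow_natCast, ← Real.rpow_add (norm_pos_iff.2 hv)]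
    ring_nf
  rw [lap_mul_norm_rpow (contDiff_quadForm a b α β).contDiffAt p hv, lap_quadForm,
    fderiv_quadForm_self, hpow]
  simp only [quadForm]
  ring

end QuadForm

def stokesletRow (i : Fin 3) (f : Fin 3 → ℝ) (v : E3) : ℝ :=
  (8 * π)⁻¹ *
    (quadForm (EuclideanSpace.single i 1) (WithLp.toLp 2 f) (f i) 1 v * ‖v‖ ^ (-3 : ℝ))

lemma sum_J_mul_eq_stokesletRow (x y : E3) (i : Fin 3) (f : Fin 3 → ℝ) :
    ∑ j, J x y i j * f j = stokesletRow i f (x - y) := by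
  rcases eq_or_ne ‖x - y‖ 0 with h | h
  · simp [J, stokesletRow, h]
  · fin_cases i <;> simp [J, stokesletRow, quadForm, Fin.sum_univ_three, PiLp.inner_apply] <;>
      field_simp <;> ring

lemma lap_stokesletRow (i : Fin 3) (f : Fin 3 → ℝ) {v : E3} (hv : v ≠ 0) :
    lap (stokesletRow i f) v =
      (8 * π)⁻¹ *
        (quadForm (EuclideanSpace.single i 1) (WithLp.toLp 2 f) (2 * f i) (-6) v * ‖v‖ ^ (-5 : ℝ)) := by
  unfold stokesletRow
  rw [lap_const_mul, lap_quadForm_mul_norm_rpow _ _ _ _ _ hv]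
  norm_num [EuclideanSpace.inner_single_left]

lemma lap_lap_stokesletRow (i : Fin 3) (f : Fin 3 → ℝ) {v : E3} (hv : v ≠ 0) :
    lap (lap (stokesletRow i f)) v = 0 := by
  rw [lap_congr ((eventually_ne_nhds hv).mono fun _ hx => lap_stokesletRow i f hx), lap_const_mul,
    lap_quadForm_mul_norm_rpow _ _ _ _ _ hv]
  norm_num [EuclideanSpace.inner_single_left, quadForm]
  left
  ring

end Stokeslet

theorem stmt19_general (y : E3) (a b : ℝ) (f : Fin 3 → ℝ) :
    ∀ x : E3, x ≠ y → ∀ i : Fin 3,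
      lap (fun x => lap (fun y => ∑ j : Fin 3, J x y i j * f j) y) x = 0 ∧
      ((∑ j : Fin 3, J x y i j * f j)
        + (a ^ 2 / 6) * lap (fun x => ∑ j : Fin 3, J x y i j * f j) x
        + (b ^ 2 / 6) * lap (fun y => ∑ j : Fin 3, J x y i j * f j) y
        + (a ^ 2 / 6) * (b ^ 2 / 6)
          * lap (fun x => lap (fun y => ∑ j : Fin 3, J x y i j * f j) y) x)
      = (∑ j : Fin 3, J x y i j * f j)
        + ((a ^ 2 + b ^ 2) / 6) * lap (fun x => ∑ j : Fin 3, J x y i j * f j) x := by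
  intro x hx i
  simp only [Stokeslet.sum_J_mul_eq_stokesletRow, Stokeslet.lap_comp_const_sub,
    Stokeslet.lap_comp_sub]
  have h := Stokeslet.lap_lap_stokesletRow i f (sub_ne_zero.2 hx)
  exact ⟨h, by rw [h]; ring⟩

/-- The free-space RPY bi-Laplacian term vanishes, so the RPY velocity simplifies. -/
theorem stmt19 (y : E3) (a b : ℝ) (ha : 0 < a) (hb : 0 < b) (f : Fin 3 → ℝ) :
    ∀ x : E3, x ≠ y → ∀ i : Fin 3,
      lap (fun x => lap (fun y => ∑ j : Fin 3, J x y i j * f j) y) x = 0 ∧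
      ((∑ j : Fin 3, J x y i j * f j)
        + (a ^ 2 / 6) * lap (fun x => ∑ j : Fin 3, J x y i j * f j) x
        + (b ^ 2 / 6) * lap (fun y => ∑ j : Fin 3, J x y i j * f j) y
        + (a ^ 2 / 6) * (b ^ 2 / 6)
          * lap (fun x => lap (fun y => ∑ j : Fin 3, J x y i j * f j) y) x)
      = (∑ j : Fin 3, J x y i j * f j)
        + ((a ^ 2 + b ^ 2) / 6) * lap (fun x => ∑ j : Fin 3, J x y i j * f j) x :=
  stmt19_general y a b f
end
end
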